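/- arXiv:2206.04261 — 2 statements merged into one kernel-verified Lean document; each statement's English description precedes it below -/
import Mathlib

section
/- Let n ≥ 11. If λ is a maximal unrefinable partition of T_n − d with largest part 2n − 3, then d = 2, and the unique such partition is (1, 2, ..., n−2, 2n−3). -/
/-- The n-th triangular number. -/
def T (n : ℕ) : ℕ := n * (n + 1) / 2

/-- A partition of `N` into distinct parts, represented as a finite set of
positive integers with at least two elements summing to `N`. -/
def DistinctPartition (N : ℕ) (S : Finset ℕ) : Prop :=
  (∀ x ∈ S, 0 < x) ∧ 2 ≤ S.card ∧ S.sum id = N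

/-- The missing parts: integers in `{1, …, λ_t}` not appearing in the partition. -/
def Missing (S : Finset ℕ) : Finset ℕ := Finset.Icc 1 (S.sup id) \ S

/-- No part is the sum of two distinct missing parts. -/
def Unrefinable (S : Finset ℕ) : Prop :=
  ∀ a ∈ Missing S, ∀ b ∈ Missing S, a ≠ b → a + b ∉ S

def UnrefinablePartition (N : ℕ) (S : Finset ℕ) : Prop :=
  DistinctPartition N S ∧ Unrefinable S

/-- A maximal unrefinable partition: its largest part is maximal among the
largest parts of all unrefinable partitions of `N`. -/
def MaximalUnrefinable (N : ℕ) (S : Finset ℕ) : Prop :=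
  UnrefinablePartition N S ∧
    ∀ S' : Finset ℕ, UnrefinablePartition N S' → S'.sup id ≤ S.sup id

lemma two_mul_T (n : ℕ) : 2 * T n = n * (n + 1) := by
  have h : 2 ∣ n * (n + 1) := (Nat.even_mul_succ_self n).two_dvd
  exact Nat.mul_div_cancel' h

lemma T_add_two (k : ℕ) : T (k + 2) = T k + (2 * k + 3) := by
  have h1 := two_mul_T (k + 2)
  have h2 := two_mul_T k
  have hq : (k + 2) * (k + 2 + 1) = k * (k + 1) + (4 * k + 6) := by ring
  rw [hq] at h1
  omega

lemma sum_Icc_id_eq_T (k : ℕ) : (Finset.Icc 1 k).sum id = T k := by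
  induction k with
  | zero => simp [T]
  | succ k ih =>
    rw [Finset.sum_Icc_succ_top (by omega : 1 ≤ k + 1), ih]
    have h1 := two_mul_T (k + 1)
    have h2 := two_mul_T k
    have hq : (k + 1) * (k + 1 + 1) = k * (k + 1) + (2 * (k + 1)) := by ring
    rw [hq] at h1
    simp only [id]
    omega

theorem max_2n_sub_3 (n d : ℕ) (hn : 11 ≤ n) (hd1 : 1 ≤ d) (hd2 : d ≤ n - 1)
    (S : Finset ℕ) (h : MaximalUnrefinable (T n - d) S)
    (hsup : S.sup id = 2 * n - 3) :
    d = 2 ∧ S = insert (2 * n - 3) (Finset.Icc 1 (n - 2)) := by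
  obtain ⟨⟨⟨hpos, hcard, hsum⟩, hunref⟩, hmax⟩ := h
  -- d ≠ 1, via the unrefinable partition [1, n-2] ∪ {2n-2} of T n - 1
  have hd_ne_one : d ≠ 1 := by
    intro hd
    subst hd
    set S0 : Finset ℕ := insert (2 * n - 2) (Finset.Icc 1 (n - 2)) with hS0
    have hnotmem : (2 * n - 2) ∉ Finset.Icc 1 (n - 2) := by
      rw [Finset.mem_Icc]; omega
    have hsupIcc : (Finset.Icc 1 (n - 2)).sup id = n - 2 := by
      apply le_antisymm
      · exact Finset.sup_le fun x hx => (Finset.mem_Icc.mp hx).2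
      · exact Finset.le_sup (f := id) (Finset.mem_Icc.mpr ⟨by omega, le_rfl⟩)
    have hsup0 : S0.sup id = 2 * n - 2 := by
      rw [hS0, Finset.sup_insert, hsupIcc]
      simp only [id]
      omega
    have hup : UnrefinablePartition (T n - 1) S0 := by
      refine ⟨⟨?_, ?_, ?_⟩, ?_⟩
      · intro x hx
        rw [hS0, Finset.mem_insert] at hx
        rcases hx with rfl | hx
        · omega
        · exact (Finset.mem_Icc.mp hx).1
      · rw [hS0, Finset.card_insert_of_notMem hnotmem, Nat.card_Icc]; omega
      · rw [hS0, Finset.sum_insert hnotmem, sum_Icc_id_eq_T]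
        have hT := T_add_two (n - 2)
        have h2 : n - 2 + 2 = n := by omega
        rw [h2] at hT
        simp only [id]
        omega
      · intro a ha b hb hab hmem
        rw [Missing, hsup0, Finset.mem_sdiff, Finset.mem_Icc] at ha hb
        obtain ⟨⟨ha1, ha2⟩, haS⟩ := ha
        obtain ⟨⟨hb1, hb2⟩, hbS⟩ := hb
        have ha3 : n - 1 ≤ a := by
          by_contra hc
          push_neg at hc
          apply haS
          rw [hS0]
          exact Finset.mem_insert_of_mem (Finset.mem_Icc.mpr ⟨ha1, by omega⟩)
        have hb3 : n - 1 ≤ b := by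
          by_contra hc
          push_neg at hc
          apply hbS
          rw [hS0]
          exact Finset.mem_insert_of_mem (Finset.mem_Icc.mpr ⟨hb1, by omega⟩)
        rw [hS0, Finset.mem_insert, Finset.mem_Icc] at hmem
        omega
    have := hmax S0 hup
    rw [hsup0, hsup] at this
    omega
  have hne : S.Nonempty := Finset.card_pos.mp (by omega)
  have hymem : (2 * n - 3) ∈ S := by
    obtain ⟨b, hb, hbe⟩ := Finset.exists_mem_eq_sup S hne id
    rw [hsup] at hbe
    simp only [id] at hbe
    rwa [hbe]
  -- key pairing lemma
  have hpair : ∀ j, 1 ≤ j → j ≤ n - 2 → j ∉ S → (2 * n - 3 - j) ∈ S := by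
    intro j hj1 hj2 hjS
    by_contra hcS
    have hjM : j ∈ Missing S := by
      rw [Missing, hsup, Finset.mem_sdiff, Finset.mem_Icc]
      exact ⟨⟨hj1, by omega⟩, hjS⟩
    have hcM : (2 * n - 3 - j) ∈ Missing S := by
      rw [Missing, hsup, Finset.mem_sdiff, Finset.mem_Icc]
      exact ⟨⟨by omega, by omega⟩, hcS⟩
    have hne' : j ≠ 2 * n - 3 - j := by omega
    have hno := hunref j hjM _ hcM hne'
    have hj : j + (2 * n - 3 - j) = 2 * n - 3 := by omega
    rw [hj] at hno
    exact hno hymem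
  set m := n - 2 with hm
  set g : ℕ → ℕ := fun j => if j ∈ S then j else 2 * n - 3 - j with hg
  have hgS : ∀ j, j ∈ S → g j = j := fun j hj => if_pos hj
  have hgN : ∀ j, j ∉ S → g j = 2 * n - 3 - j := fun j hj => if_neg hj
  have hgmem : ∀ j ∈ Finset.Icc 1 m, g j ∈ S.erase (2 * n - 3) := by
    intro j hj
    rw [Finset.mem_Icc] at hj
    rw [Finset.mem_erase]
    by_cases hjS : j ∈ S
    · rw [hgS j hjS]
      exact ⟨by omega, hjS⟩
    · have hp := hpair j hj.1 hj.2 hjS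
      rw [hgN j hjS]
      exact ⟨by omega, hp⟩
  have hgge : ∀ j ∈ Finset.Icc 1 m, id j ≤ g j := by
    intro j hj
    rw [Finset.mem_Icc] at hj
    by_cases hjS : j ∈ S
    · rw [hgS j hjS]; exact le_rfl
    · rw [hgN j hjS]; simp only [id]; omega
  have hginj : ∀ j ∈ Finset.Icc 1 m, ∀ j' ∈ Finset.Icc 1 m, g j = g j' → j = j' := by
    intro j hj j' hj' hgj
    rw [Finset.mem_Icc] at hj hj'
    by_cases h1 : j ∈ S <;> by_cases h2 : j' ∈ S <;>
      [rw [hgS j h1, hgS j' h2] at hgj; rw [hgS j h1, hgN j' h2] at hgj;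
       rw [hgN j h1, hgS j' h2] at hgj; rw [hgN j h1, hgN j' h2] at hgj] <;> omega
  have himg : (Finset.Icc 1 m).image g ⊆ S.erase (2 * n - 3) :=
    Finset.image_subset_iff.mpr hgmem
  have key : T m ≤ (S.erase (2 * n - 3)).sum id := by
    calc T m = (Finset.Icc 1 m).sum id := (sum_Icc_id_eq_T m).symm
      _ ≤ (Finset.Icc 1 m).sum g := Finset.sum_le_sum hgge
      _ = ((Finset.Icc 1 m).image g).sum id := by rw [Finset.sum_image hginj]; rfl
      _ ≤ (S.erase (2 * n - 3)).sum id := Finset.sum_le_sum_of_subset himg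
  have hsplit : (S.erase (2 * n - 3)).sum id + (2 * n - 3) = S.sum id := by
    have hh := Finset.sum_erase_add S id hymem
    simpa using hh
  have hTn : T n = T m + (2 * n - 3) + 2 := by
    have hT := T_add_two m
    have h2 : m + 2 = n := by omega
    rw [h2] at hT
    omega
  obtain ⟨tm, htm⟩ : ∃ x, T m = x := ⟨_, rfl⟩
  obtain ⟨tn, htn⟩ : ∃ x, T n = x := ⟨_, rfl⟩
  rw [htn] at hsum hTn
  rw [htm] at key hTn
  obtain ⟨es, hes⟩ : ∃ x, (S.erase (2 * n - 3)).sum id = x := ⟨_, rfl⟩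
  obtain ⟨ss, hss⟩ : ∃ x, S.sum id = x := ⟨_, rfl⟩
  rw [hes] at key hsplit
  rw [hss] at hsum hsplit
  have hdle : d ≤ 2 := by omega
  have hd2 : d = 2 := by omega
  subst hd2
  have herase_sum : (S.erase (2 * n - 3)).sum id = T m := by rw [hes, htm]; omega
  have hsum_g : (Finset.Icc 1 m).sum g ≤ T m := by
    calc (Finset.Icc 1 m).sum g = ((Finset.Icc 1 m).image g).sum id := by
          rw [Finset.sum_image hginj]; rfl
      _ ≤ (S.erase (2 * n - 3)).sum id := Finset.sum_le_sum_of_subset himg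
      _ = T m := herase_sum
  have hsum_eq : (Finset.Icc 1 m).sum id = (Finset.Icc 1 m).sum g := by
    have h1 : (Finset.Icc 1 m).sum id = T m := sum_Icc_id_eq_T m
    have h2 : (Finset.Icc 1 m).sum id ≤ (Finset.Icc 1 m).sum g := Finset.sum_le_sum hgge
    omega
  have hpt : ∀ j ∈ Finset.Icc 1 m, id j = g j :=
    (Finset.sum_eq_sum_iff_of_le hgge).mp hsum_eq
  have hsub : Finset.Icc 1 m ⊆ S.erase (2 * n - 3) := by
    intro j hj
    have hpj := hpt j hj
    rw [Finset.mem_Icc] at hj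
    by_cases hjS : j ∈ S
    · exact Finset.mem_erase.mpr ⟨by omega, hjS⟩
    · simp only [hg, hjS, if_false, id] at hpj
      omega
  have hsd := Finset.sum_sdiff (f := id) hsub
  have hzero : ∀ x ∈ S.erase (2 * n - 3) \ Finset.Icc 1 m, id x = 0 := by
    apply Finset.sum_eq_zero_iff.mp
    rw [sum_Icc_id_eq_T, herase_sum] at hsd
    omega
  have hempty : S.erase (2 * n - 3) = Finset.Icc 1 m := by
    apply Finset.Subset.antisymm ?_ hsub
    intro x hx
    by_contra hc
    have h0 := hzero x (Finset.mem_sdiff.mpr ⟨hx, hc⟩)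
    have hxp := hpos x (Finset.mem_of_mem_erase hx)
    simp only [id] at h0
    omega
  refine ⟨rfl, ?_⟩
  rw [← Finset.insert_erase hymem, hempty]
end

section
/- For n ≥ 11, the number of maximal unrefinable partitions of T_n − (n−1) equals 1, of T_n − (n−3) equals 1, and of T_n − (n−5) equals 2. -/
open Finset

lemma T_succ (k : ℕ) : T (k + 1) = T k + (k + 1) := by
  unfold T
  rw [show (k + 1) * (k + 1 + 1) = k * (k + 1) + 2 * (k + 1) by ring,
    Nat.add_mul_div_left _ _ two_pos]

lemma T_eq_sum_Icc (k : ℕ) : T k = ∑ i ∈ Icc 1 k, i := by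
  induction k with
  | zero => rfl
  | succ k ih => rw [T_succ, ih, sum_Icc_succ_top (by omega)]

def reflectParts (m k : ℕ) (F : Finset ℕ) : Finset ℕ :=
  insert m ((Icc 1 k).image fun a => if a ∈ F then m - a else a)

section ReflectParts

variable {m k : ℕ}

lemma sup_reflectParts (F : Finset ℕ) (hk : k < m) : (reflectParts m k F).sup id = m := by
  refine le_antisymm (Finset.sup_le fun x hx => ?_) (le_sup (f := id) (mem_insert_self _ _))
  simp only [reflectParts, mem_insert, mem_image, mem_Icc] at hx
  rcases hx with rfl | ⟨a, ha, rfl⟩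
  · rfl
  · split_ifs <;> simp only [id] <;> omega

lemma sum_reflectParts {F : Finset ℕ} (hk : 2 * k < m) (hF : F ⊆ Icc 1 k) :
    ∑ x ∈ reflectParts m k F, x = m + T k + ∑ a ∈ F, (m - 2 * a) := by
  set r : ℕ → ℕ := fun a => if a ∈ F then m - a else a
  have hr : ∀ a ∈ Icc 1 k, r a = a + if a ∈ F then m - 2 * a else 0 := by
    intro a ha
    rw [mem_Icc] at ha
    simp only [r]
    split_ifs <;> omega
  have hm : m ∉ (Icc 1 k).image r := by
    simp only [mem_image, mem_Icc, not_exists, not_and]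
    intro a ha
    simp only [r]
    split_ifs <;> omega
  have hinj : Set.InjOn r (Icc 1 k) := by
    intro a ha b hb h
    simp only [coe_Icc, Set.mem_Icc, r] at ha hb h
    split_ifs at h <;> omega
  rw [reflectParts, sum_insert hm, sum_image hinj, sum_congr rfl hr, sum_add_distrib, sum_ite_mem,
    inter_eq_right.mpr hF, ← T_eq_sum_Icc, add_assoc]

variable {N : ℕ} {S : Finset ℕ}

lemma reflectParts_subset (hS : Unrefinable S) (hne : S.Nonempty) (hk : 2 * k < S.sup id) :
    reflectParts (S.sup id) k (Icc 1 k \ S) ⊆ S := by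
  have hmem : S.sup id ∈ S := by
    obtain ⟨t, ht, hsup⟩ := exists_mem_eq_sup S hne id
    rwa [hsup]
  intro x hx
  simp only [reflectParts, mem_insert, mem_image, mem_Icc, mem_sdiff] at hx
  rcases hx with rfl | ⟨a, ha, rfl⟩
  · exact hmem
  split_ifs with haS
  · by_contra hrefl
    refine hS a ?_ (S.sup id - a) ?_ (by omega) (by rwa [Nat.add_sub_cancel' (by omega)])
    · exact mem_sdiff.mpr ⟨mem_Icc.mpr (by omega), haS.2⟩
    · exact mem_sdiff.mpr ⟨mem_Icc.mpr (by omega), hrefl⟩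
  · simp only [not_and, not_not] at haS
    exact haS ha

lemma UnrefinablePartition.nonempty (hU : UnrefinablePartition N S) : S.Nonempty :=
  card_pos.mp (by have := hU.1.2.1; omega)

lemma lt_of_mem_sdiff_reflectParts (hpos : ∀ x ∈ S, 0 < x) {x : ℕ}
    (hx : x ∈ S \ reflectParts (S.sup id) k (Icc 1 k \ S)) : k < x := by
  rw [mem_sdiff] at hx
  by_contra hxk
  refine hx.2 (mem_insert_of_mem (mem_image.mpr ⟨x, mem_Icc.mpr ⟨hpos x hx.1, by omega⟩, ?_⟩))
  simp [hx.1]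

lemma sum_reflectParts_add_sum_sdiff (hU : UnrefinablePartition N S) (hk : 2 * k < S.sup id) :
    S.sup id + T k + ∑ a ∈ Icc 1 k \ S, (S.sup id - 2 * a)
      + ∑ x ∈ S \ reflectParts (S.sup id) k (Icc 1 k \ S), x = N := by
  rw [← sum_reflectParts hk sdiff_subset, add_comm,
    sum_sdiff (reflectParts_subset hU.2 hU.nonempty hk)]
  exact hU.1.2.2

lemma sup_add_T_le (hU : UnrefinablePartition N S) (hk : 2 * k < S.sup id) :
    S.sup id + T k ≤ N := by
  have := sum_reflectParts_add_sum_sdiff hU hk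
  omega

lemma eq_reflectParts_of_lt (hU : UnrefinablePartition N S) (hk : 2 * k < S.sup id)
    (hN : N < S.sup id + T k + (k + 1)) : S = reflectParts (S.sup id) k (Icc 1 k \ S) := by
  have hsum := sum_reflectParts_add_sum_sdiff hU hk
  have hempty : S \ reflectParts (S.sup id) k (Icc 1 k \ S) = ∅ := by
    by_contra hne
    obtain ⟨x, hx⟩ := nonempty_iff_ne_empty.mpr hne
    have := lt_of_mem_sdiff_reflectParts hU.1.1 hx
    have := single_le_sum (f := fun y => y) (fun y _ => Nat.zero_le y) hx
    omega
  exact (sdiff_eq_empty_iff_subset.mp hempty).antisymm (reflectParts_subset hU.2 hU.nonempty hk)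

end ReflectParts

def distinctPartitions (s : ℕ) : Finset (Finset ℕ) :=
  (Icc 1 s).powerset.filter fun B => ∑ b ∈ B, b = s

section DistinctPartitions

variable {s : ℕ} {B : Finset ℕ}

lemma mem_distinctPartitions : B ∈ distinctPartitions s ↔ B ⊆ Icc 1 s ∧ ∑ b ∈ B, b = s := by
  rw [distinctPartitions, mem_filter, mem_powerset]

lemma distinctPartitions_nonempty (s : ℕ) : (distinctPartitions s).Nonempty := by
  rcases s with _ | s
  · exact ⟨∅, mem_distinctPartitions.mpr ⟨empty_subset _, sum_empty⟩⟩
  · exact ⟨{s + 1}, mem_distinctPartitions.mpr ⟨by simp, sum_singleton _ _⟩⟩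

lemma add_le_of_mem_distinctPartitions (hB : B ∈ distinctPartitions s) {u v : ℕ} (hu : u ∈ B)
    (hv : v ∈ B) (huv : u ≠ v) : u + v ≤ s := by
  rw [← (mem_distinctPartitions.mp hB).2, ← sum_pair (f := fun b => b) huv]
  exact sum_le_sum_of_subset (insert_subset_iff.mpr ⟨hu, singleton_subset_iff.mpr hv⟩)

end DistinctPartitions

def reflectPartition (c : ℕ) (B : Finset ℕ) : Finset ℕ :=
  reflectParts (2 * c) (c - 1) (B.image (c - ·))

section ReflectPartition

variable {c s : ℕ} {B : Finset ℕ}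

lemma sup_reflectPartition (hc : 0 < c) : (reflectPartition c B).sup id = 2 * c :=
  sup_reflectParts _ (by omega)

lemma mem_reflectPartition (hB : B ⊆ Icc 1 (c - 1)) {x : ℕ} :
    x ∈ reflectPartition c B ↔
      x = 2 * c ∨ (0 < x ∧ x < c ∧ c - x ∉ B) ∨ (c < x ∧ x < 2 * c ∧ x - c ∈ B) := by
  have himage : ∀ a ≤ c, (∃ b ∈ B, c - b = a) ↔ c - a ∈ B := by
    intro a ha
    constructor
    · rintro ⟨b, hb, rfl⟩
      rwa [Nat.sub_sub_self ((mem_Icc.mp (hB hb)).2.trans (Nat.sub_le c 1))]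
    · exact fun h => ⟨c - a, h, Nat.sub_sub_self ha⟩
  simp only [reflectPartition, reflectParts, mem_insert, mem_image, mem_Icc]
  constructor
  · rintro (h | ⟨a, ha, rfl⟩)
    · exact Or.inl h
    · right
      split_ifs with h
      · rw [himage a (by omega)] at h
        exact Or.inr ⟨by omega, by omega, by rwa [show 2 * c - a - c = c - a by omega]⟩
      · rw [himage a (by omega)] at h
        exact Or.inl ⟨by omega, by omega, h⟩
  · rintro (h | ⟨h0, hc, hx⟩ | ⟨hc, h2c, hx⟩)
    · exact Or.inl h
    · refine Or.inr ⟨x, ⟨by omega, by omega⟩, ?_⟩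
      rw [if_neg ((himage x hc.le).not.mpr hx)]
    · refine Or.inr ⟨2 * c - x, ⟨by omega, by omega⟩, ?_⟩
      rw [if_pos ((himage _ (by omega)).mpr (by rwa [show c - (2 * c - x) = x - c by omega]))]
      omega

lemma sum_reflectPartition (hc : 0 < c) (hB : B ⊆ Icc 1 (c - 1)) :
    ∑ x ∈ reflectPartition c B, x = T (c - 1) + 2 * c + 2 * ∑ b ∈ B, b := by
  have hBc : ∀ b ∈ B, 1 ≤ b ∧ b ≤ c - 1 := fun b hb => mem_Icc.mp (hB hb)
  have hsub : B.image (c - ·) ⊆ Icc 1 (c - 1) := by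
    intro a ha
    obtain ⟨b, hb, rfl⟩ := mem_image.mp ha
    have := hBc b hb
    exact mem_Icc.mpr ⟨by omega, by omega⟩
  have hinj : Set.InjOn (c - ·) (B : Set ℕ) := fun a ha b hb h => by
    have := hBc a ha; have := hBc b hb; simp only at h; omega
  rw [reflectPartition, sum_reflectParts (by omega) hsub, sum_image hinj, mul_sum,
    sum_congr rfl fun b hb => show 2 * c - 2 * (c - b) = 2 * b by have := hBc b hb; omega]
  ring

lemma subset_Icc_of_mem_distinctPartitions (hs : 2 * s < c) (hB : B ∈ distinctPartitions s) :
    B ⊆ Icc 1 (c - 1) :=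
  (mem_distinctPartitions.mp hB).1.trans (Icc_subset_Icc_right (by omega))

lemma unrefinable_reflectPartition (hs : 2 * s < c) (hB : B ∈ distinctPartitions s) :
    Unrefinable (reflectPartition c B) := by
  have hBc := subset_Icc_of_mem_distinctPartitions hs hB
  have hle : ∀ b ∈ B, b ≤ s := fun b hb => (mem_Icc.mp ((mem_distinctPartitions.mp hB).1 hb)).2
  -- Missing parts are at least `c - s`, so two of them can only sum to `2c` or to `c + t`, `t ∈ B`.
  intro a ha b hb hab hsum
  wlog hlt : a < b generalizing a b
  · exact this b hb a ha hab.symm (by rwa [add_comm]) (by omega)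
  rw [Missing, sup_reflectPartition (by omega), mem_sdiff, mem_Icc, mem_reflectPartition hBc]
    at ha hb
  rw [mem_reflectPartition hBc] at hsum
  have hac : a < c := by rcases hsum with h | ⟨_, h, _⟩ | ⟨_, h, _⟩ <;> omega
  have hu : c - a ∈ B := by
    by_contra h
    exact ha.2 (Or.inr (Or.inl ⟨by omega, hac, h⟩))
  have := hle _ hu
  rcases hsum with h | ⟨-, h, -⟩ | ⟨-, h, ht⟩
  · exact hb.2 (Or.inr (Or.inr ⟨by omega, by omega, by rwa [show b - c = c - a by omega]⟩))
  · omega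
  · have := hle _ ht
    have hv : c - b ∈ B := by
      by_contra h
      exact hb.2 (Or.inr (Or.inl ⟨by omega, by omega, h⟩))
    have := add_le_of_mem_distinctPartitions hB hu hv (by omega)
    omega

lemma unrefinablePartition_reflectPartition (hs : 2 * s < c) (hc : 1 < c)
    (hB : B ∈ distinctPartitions s) :
    UnrefinablePartition (T (c - 1) + 2 * c + 2 * s) (reflectPartition c B) := by
  have hBc := subset_Icc_of_mem_distinctPartitions hs hB
  refine ⟨⟨fun x hx => ?_, one_lt_card.mpr ⟨2 * c, ?_, 1, ?_, by omega⟩, ?_⟩,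
    unrefinable_reflectPartition hs hB⟩
  · rw [mem_reflectPartition hBc] at hx
    rcases hx with rfl | ⟨h, -⟩ | ⟨h, -⟩ <;> omega
  · exact (mem_reflectPartition hBc).mpr (Or.inl rfl)
  · refine (mem_reflectPartition hBc).mpr (Or.inr (Or.inl ⟨one_pos, hc, fun h => ?_⟩))
    have := (mem_Icc.mp ((mem_distinctPartitions.mp hB).1 h)).2
    omega
  · rw [← (mem_distinctPartitions.mp hB).2]
    exact sum_reflectPartition (by omega) hBc

end ReflectPartition

section Classification

variable {c s : ℕ} {S : Finset ℕ}

lemma sup_le_of_unrefinablePartition (hs : 2 * s < c)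
    (hU : UnrefinablePartition (T (c - 1) + 2 * c + 2 * s) S) : S.sup id ≤ 2 * c := by
  by_contra! h
  have := sup_add_T_le hU (k := c) (by omega)
  have hT : T c = T (c - 1) + c := by
    obtain ⟨d, rfl⟩ : ∃ d, c = d + 1 := ⟨c - 1, by omega⟩
    rw [T_succ, Nat.add_sub_cancel]
  omega

lemma exists_eq_reflectPartition (hs : 2 * s < c)
    (hU : UnrefinablePartition (T (c - 1) + 2 * c + 2 * s) S) (hsup : S.sup id = 2 * c) :
    ∃ B ∈ distinctPartitions s, S = reflectPartition c B := by
  have hk : 2 * (c - 1) < S.sup id := by omega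
  have hS := eq_reflectParts_of_lt hU hk (by omega)
  obtain ⟨F, hF⟩ : ∃ F, F = Icc 1 (c - 1) \ S := ⟨_, rfl⟩
  have hFc : ∀ a ∈ F, 1 ≤ a ∧ a ≤ c - 1 := fun a ha => mem_Icc.mp (mem_sdiff.mp (hF ▸ ha)).1
  have hsum : ∑ a ∈ F, (c - a) = s := by
    have h : ∑ x ∈ S, x = _ := hU.1.2.2
    rw [hS, sum_reflectParts hk sdiff_subset, hsup, ← hF] at h
    have : ∑ a ∈ F, (2 * c - 2 * a) = 2 * ∑ a ∈ F, (c - a) := by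
      rw [mul_sum]
      exact sum_congr rfl fun a _ => by omega
    omega
  have hinj : Set.InjOn (c - ·) (F : Set ℕ) := fun a ha b hb h => by
    have := hFc a ha; have := hFc b hb; simp only at h; omega
  refine ⟨F.image (c - ·), mem_distinctPartitions.mpr ⟨fun b hb => ?_, ?_⟩, ?_⟩
  · obtain ⟨a, ha, rfl⟩ := mem_image.mp hb
    have := hFc a ha
    have := single_le_sum (f := fun a => c - a) (fun _ _ => Nat.zero_le _) ha
    exact mem_Icc.mpr ⟨by omega, by omega⟩
  · rwa [sum_image hinj]
  · rw [reflectPartition, image_image, image_congr (g := id) fun a ha => ?_, image_id, hF,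
      ← hsup]
    · exact hS
    · have := hFc a ha
      simp only [Function.comp_apply, id]
      omega

lemma setOf_maximalUnrefinable_eq (hs : 2 * s < c) (hc : 1 < c) :
    {S | MaximalUnrefinable (T (c - 1) + 2 * c + 2 * s) S} =
      (distinctPartitions s).image (reflectPartition c) := by
  ext S
  rw [Set.mem_ofPred_eq, coe_image, Set.mem_image]
  constructor
  · rintro ⟨hU, hmax⟩
    obtain ⟨B₀, hB₀⟩ := distinctPartitions_nonempty s
    have h := hmax _ (unrefinablePartition_reflectPartition hs hc hB₀)
    rw [sup_reflectPartition (by omega)] at h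
    obtain ⟨B, hB, rfl⟩ :=
      exists_eq_reflectPartition hs hU ((sup_le_of_unrefinablePartition hs hU).antisymm h)
    exact ⟨B, hB, rfl⟩
  · rintro ⟨B, hB, rfl⟩
    refine ⟨unrefinablePartition_reflectPartition hs hc hB, fun S' hS' => ?_⟩
    rw [sup_reflectPartition (by omega)]
    exact sup_le_of_unrefinablePartition hs hS'

lemma injOn_reflectPartition (hs : 2 * s < c) :
    Set.InjOn (reflectPartition c) (distinctPartitions s) := by
  have key : ∀ B ∈ distinctPartitions s, ∀ b,
      b ∈ B ↔ 1 ≤ b ∧ b < c ∧ c + b ∈ reflectPartition c B := by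
    intro B hB b
    have hBc := subset_Icc_of_mem_distinctPartitions hs hB
    rw [mem_reflectPartition hBc, Nat.add_sub_cancel_left]
    constructor
    · intro hb
      have := mem_Icc.mp (hBc hb)
      exact ⟨by omega, by omega, Or.inr (Or.inr ⟨by omega, by omega, hb⟩)⟩
    · rintro ⟨-, hbc, h | ⟨-, h, -⟩ | ⟨-, -, hb⟩⟩
      · omega
      · omega
      · exact hb
  intro B₁ hB₁ B₂ hB₂ h
  ext b
  rw [key B₁ hB₁, key B₂ hB₂, h]

theorem ncard_setOf_maximalUnrefinable (hs : 2 * s < c) (hc : 1 < c) :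
    {S | MaximalUnrefinable (T (c - 1) + 2 * c + 2 * s) S}.ncard = (distinctPartitions s).card := by
  rw [setOf_maximalUnrefinable_eq hs hc, Set.ncard_coe_finset,
    card_image_of_injOn (injOn_reflectPartition hs)]

end Classification

theorem count_large_d (n : ℕ) (hn : 11 ≤ n) :
    {S : Finset ℕ | MaximalUnrefinable (T n - (n - 1)) S}.ncard = 1 ∧
    {S : Finset ℕ | MaximalUnrefinable (T n - (n - 3)) S}.ncard = 1 ∧
    {S : Finset ℕ | MaximalUnrefinable (T n - (n - 5)) S}.ncard = 2 := by
  have hT : T n = T (n - 2 - 1) + (n - 2) + (n - 1) + n := by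
    obtain ⟨m, rfl⟩ : ∃ m, n = m + 1 + 1 + 1 := ⟨n - 3, by omega⟩
    rw [T_succ, T_succ, T_succ, show m + 1 + 1 + 1 - 2 - 1 = m by omega]
    omega
  refine ⟨?_, ?_, ?_⟩
  · rw [show T n - (n - 1) = T (n - 2 - 1) + 2 * (n - 2) + 2 * 1 by omega,
      ncard_setOf_maximalUnrefinable (by omega) (by omega)]
    rfl
  · rw [show T n - (n - 3) = T (n - 2 - 1) + 2 * (n - 2) + 2 * 2 by omega,
      ncard_setOf_maximalUnrefinable (by omega) (by omega)]
    rfl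
  · rw [show T n - (n - 5) = T (n - 2 - 1) + 2 * (n - 2) + 2 * 3 by omega,
      ncard_setOf_maximalUnrefinable (by omega) (by omega)]
    rfl
end
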